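/- arXiv:2309.04181 — 2 statements merged into one kernel-verified Lean document; each statement's English description precedes it below -/
import Mathlib

section
/- The 2-firm, 2-worker market with preferences f1: {w1,w2} ≻ ∅, f2: {w1} ≻ {w2} ≻ ∅, w1: f1 ≻ f2, w2: f1 ≻ f2 is not concave: no full-time matching dominates the schedule matching assigning time share 1/2 to each of {w1,w2} (at f1), {w1} (at f2), and {w2} (at f2). -/
open Finset
open scoped Classical

noncomputable section

variable {F W : Type} [Fintype F] [Fintype W] [DecidableEq F] [DecidableEq W]

/-- The set of workers assigned to firm `f` in matching `μ`. -/
def assigned (μ : W → Option F) (f : F) : Finset W :=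
  Finset.univ.filter fun w => μ w = some f

/-- Worker `w`'s strict comparison of situations (a situation is a firm together with
its full set of employees, or being unmatched), with the artificial externalities:
the worker is slightly better off when her employer is better off. -/
def wB (uF : F → Finset W → ℝ) (uW : W → Option F → ℝ) (w : W) :
    Option (F × Finset W) → Option (F × Finset W) → Prop
  | some p, some q =>
      uW w (some p.1) > uW w (some q.1) ∨ (p.1 = q.1 ∧ uF p.1 p.2 > uF q.1 q.2)
  | some p, none => uW w (some p.1) > uW w none
  | none, some q => uW w none > uW w (some q.1)
  | none, none => False

def wGe (uF : F → Finset W → ℝ) (uW : W → Option F → ℝ) (w : W)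
    (p q : Option (F × Finset W)) : Prop :=
  wB uF uW w p q ∨ p = q

/-- Total workload of worker `w` in the schedule `t`. -/
def workerLoad (t : F → Finset W → ℝ) (w : W) : ℝ :=
  ∑ f, ∑ S ∈ Finset.univ.filter (fun S => w ∈ S), t f S

/-- A (π-)schedule matching in the basic setting with indicator intensities and
capacities `capF`, `capW`. -/
def IsSched (uF : F → Finset W → ℝ) (capF : F → ℝ) (capW : W → ℝ)
    (t : F → Finset W → ℝ) : Prop :=
  (∀ f S, 0 ≤ t f S) ∧ (∀ f S, 0 < t f S → uF f S > uF f ∅) ∧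
  (∀ f, ∑ S, t f S ≤ capF f) ∧ (∀ w, workerLoad t w ≤ capW w)

/-- `S0` is firm `f`'s worst situation in the schedule matching `t`. -/
def WorstF (uF : F → Finset W → ℝ) (capF : F → ℝ) (t : F → Finset W → ℝ)
    (f : F) (S0 : Finset W) : Prop :=
  ((∑ S, t f S) = capF f ∧ 0 < t f S0 ∧ ∀ S, 0 < t f S → uF f S0 ≤ uF f S) ∨
  ((∑ S, t f S) ≠ capF f ∧ S0 = ∅)

/-- `p` is worker `w`'s worst situation in the schedule matching `t` (using `▷_w`). -/
def WorstW (uF : F → Finset W → ℝ) (uW : W → Option F → ℝ) (capW : W → ℝ)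
    (t : F → Finset W → ℝ) (w : W) (p : Option (F × Finset W)) : Prop :=
  (workerLoad t w = capW w ∧ ∃ f S, p = some (f, S) ∧ 0 < t f S ∧ w ∈ S ∧
    ∀ f' S', 0 < t f' S' → w ∈ S' → wGe uF uW w (some (f', S')) p) ∨
  (workerLoad t w ≠ capW w ∧ p = none)

/-- Worker `w`'s situation in the full-time matching `μ`. -/
def situ (μ : W → Option F) (w : W) : Option (F × Finset W) :=
  (μ w).map fun f => (f, assigned μ f)

/-- Matching `μ` dominates schedule matching `t`. -/
def Dominates (uF : F → Finset W → ℝ) (uW : W → Option F → ℝ)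
    (capF : F → ℝ) (capW : W → ℝ) (t : F → Finset W → ℝ) (μ : W → Option F) : Prop :=
  (∀ f S0, WorstF uF capF t f S0 → uF f (assigned μ f) ≥ uF f S0) ∧
  (∀ w p, WorstW uF uW capW t w p → wGe uF uW w (situ μ w) p)

/-- Individual rationality of a matching. -/
def IR (uF : F → Finset W → ℝ) (uW : W → Option F → ℝ) (μ : W → Option F) : Prop :=
  (∀ f, uF f (assigned μ f) ≥ uF f ∅) ∧ (∀ w, uW w (μ w) ≥ uW w none)

/-- Firm `f` together with the set of workers `S` blocks the matching `μ`. -/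
def Blocks (uF : F → Finset W → ℝ) (uW : W → Option F → ℝ) (μ : W → Option F)
    (f : F) (S : Finset W) : Prop :=
  uF f S > uF f (assigned μ f) ∧ ∀ w ∈ S, uW w (some f) ≥ uW w (μ w)

/-- Stability of a matching in the basic setting. -/
def StableM (uF : F → Finset W → ℝ) (uW : W → Option F → ℝ) (μ : W → Option F) : Prop :=
  IR uF uW μ ∧ ¬∃ f S, Blocks uF uW μ f S

/-- Firm preferences: f1 : {w1,w2} ≻ ∅ ; f2 : {w1} ≻ {w2} ≻ ∅. -/
def uF10 : Fin 2 → Finset (Fin 2) → ℝ := fun f S =>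
  if f = 0 then (if S = {0, 1} then 1 else if S = ∅ then 0 else -1)
  else (if S = {0} then 2 else if S = {1} then 1 else if S = ∅ then 0 else -1)

/-- Worker preferences: w1 : f1 ≻ f2 ; w2 : f1 ≻ f2. -/
def uW10 : Fin 2 → Option (Fin 2) → ℝ := fun _ o =>
  if o = some 0 then 2 else if o = some 1 then 1 else 0

/-- The schedule matching assigning time share 1/2 to each of {w1,w2} at f1,
{w1} at f2 and {w2} at f2. -/
def t10 : Fin 2 → Finset (Fin 2) → ℝ := fun f S =>
  if f = 0 ∧ S = {0, 1} then 1 / 2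
  else if f = 1 ∧ (S = {0} ∨ S = {1}) then 1 / 2 else 0

end

/-
In `t10` firm f1 works only half time, so its worst situation is `∅`, while f2 and both
workers are full with worst situations at f2. A dominating matching must therefore employ
both workers, give f2 exactly one of them (f2 accepts only singletons), and give f1 either
nobody or both. Counting workers, f1 would get exactly one: impossible.
-/

theorem sum_card_assigned {F W : Type} [Fintype F] [Fintype W] [DecidableEq F]
    {μ : W → Option F} (hμ : ∀ w, (μ w).isSome) :
    ∑ f, #(assigned μ f) = Fintype.card W := by
  rw [← card_univ, card_eq_sum_card_fiberwise (f := fun w => (μ w).get (hμ w))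
    (t := univ) (fun _ _ => mem_univ _)]
  refine sum_congr rfl fun f _ => congrArg card (filter_congr fun w _ => ?_)
  simp [Option.eq_some_iff_get_eq, hμ w]

theorem isSome_of_wGe_situ {F W : Type} [Fintype W] [DecidableEq F]
    {uF : F → Finset W → ℝ} {uW : W → Option F → ℝ}
    {μ : W → Option F} {w : W} {q : F × Finset W}
    (h : wGe uF uW w (situ μ w) (some q)) (hq : uW w none ≤ uW w (some q.1)) :
    (μ w).isSome := by
  rcases hμ : μ w with _ | f
  · simp only [wGe, situ, hμ, Option.map_none, wB, reduceCtorEq, or_false] at h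
    exact absurd hq (not_le.2 h)
  · rfl

theorem Finset.sum_finset_fin_two {M : Type} [AddCommMonoid M] (g : Finset (Fin 2) → M) :
    ∑ S, g S = g ∅ + g {0} + g {1} + g {0, 1} := by
  rw [show (univ : Finset (Finset (Fin 2))) = {∅, {0}, {1}, {0, 1}} by decide,
    sum_insert (by decide), sum_insert (by decide), sum_insert (by decide), sum_singleton]
  abel

theorem Finset.eq_empty_or_singleton_or_pair_fin_two (S : Finset (Fin 2)) :
    S = ∅ ∨ S = {0} ∨ S = {1} ∨ S = {0, 1} := by
  revert S; decide

theorem t10_pos {f : Fin 2} {S : Finset (Fin 2)} (h : 0 < t10 f S) :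
    (f = 0 ∧ S = {0, 1}) ∨ (f = 1 ∧ (S = {0} ∨ S = {1})) := by
  unfold t10 at h
  split_ifs at h with h₁ h₂
  · exact .inl h₁
  · exact .inr h₂
  · exact absurd h (lt_irrefl 0)

theorem sum_t10_zero : ∑ S, t10 0 S = 1 / 2 := by
  simp [t10]

theorem sum_t10_one : ∑ S, t10 1 S = 1 := by
  rw [Finset.sum_finset_fin_two]
  norm_num +decide [t10]

theorem workerLoad_t10 (w : Fin 2) : workerLoad t10 w = 1 := by
  simp only [workerLoad, Fin.sum_univ_two, Finset.sum_filter, Finset.sum_finset_fin_two]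
  fin_cases w <;> norm_num +decide [t10]

theorem isSched_t10 : IsSched uF10 (fun _ => 1) (fun _ => 1) t10 := by
  refine ⟨fun f S => ?_, fun f S hS => ?_,
    Fin.forall_fin_two.2 ⟨by norm_num [sum_t10_zero], sum_t10_one.le⟩,
    fun w => (workerLoad_t10 w).le⟩
  · unfold t10; split_ifs <;> norm_num
  · rcases t10_pos hS with ⟨rfl, rfl⟩ | ⟨rfl, rfl | rfl⟩ <;> norm_num +decide [uF10]

theorem worstF_t10_zero : WorstF uF10 (fun _ => 1) t10 0 ∅ :=
  .inr ⟨by norm_num [sum_t10_zero], rfl⟩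

theorem worstF_t10_one : WorstF uF10 (fun _ => 1) t10 1 {1} := by
  refine .inl ⟨sum_t10_one, by norm_num +decide [t10], fun S hS => ?_⟩
  rcases t10_pos hS with ⟨h, -⟩ | ⟨-, rfl | rfl⟩
  · exact absurd h (by decide)
  · norm_num +decide [uF10]
  · rfl

theorem worstW_t10 (w : Fin 2) : WorstW uF10 uW10 (fun _ => 1) t10 w (some (1, {w})) := by
  refine .inl ⟨workerLoad_t10 w, 1, {w}, rfl, by fin_cases w <;> norm_num +decide [t10],
    mem_singleton_self w, fun f S hS hw => ?_⟩
  rcases t10_pos hS with ⟨rfl, rfl⟩ | ⟨rfl, rfl | rfl⟩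
  · exact .inl (.inl (by norm_num +decide [uW10]))
  all_goals obtain rfl := mem_singleton.1 hw; exact .inr rfl

theorem card_ne_one_of_uF10_zero_ge {S : Finset (Fin 2)} (h : uF10 0 ∅ ≤ uF10 0 S) :
    #S ≠ 1 := by
  rcases Finset.eq_empty_or_singleton_or_pair_fin_two S with rfl | rfl | rfl | rfl <;> revert h <;>
    norm_num +decide [uF10]

theorem card_eq_one_of_uF10_one_ge {S : Finset (Fin 2)} (h : uF10 1 {1} ≤ uF10 1 S) :
    #S = 1 := by
  rcases Finset.eq_empty_or_singleton_or_pair_fin_two S with rfl | rfl | rfl | rfl <;> revert h <;>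
    norm_num +decide [uF10]

/-- The market f1: {w1,w2} ≻ ∅, f2: {w1} ≻ {w2} ≻ ∅, w1: f1 ≻ f2, w2: f1 ≻ f2
is not concave: `t10` is a schedule matching which no full-time matching dominates. -/
theorem stmt10 :
    IsSched uF10 (fun _ => 1) (fun _ => 1) t10 ∧
    ¬∃ μ : Fin 2 → Option (Fin 2), Dominates uF10 uW10 (fun _ => 1) (fun _ => 1) t10 μ := by
  refine ⟨isSched_t10, fun ⟨μ, hFirm, hWorker⟩ => ?_⟩
  have hMatched : ∀ w, (μ w).isSome := fun w =>
    isSome_of_wGe_situ (hWorker w _ (worstW_t10 w)) (by norm_num +decide [uW10])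
  have h₀ := card_ne_one_of_uF10_zero_ge (hFirm 0 ∅ worstF_t10_zero)
  have h₁ := card_eq_one_of_uF10_one_ge (hFirm 1 {1} worstF_t10_one)
  have hCard := sum_card_assigned hMatched
  rw [Fin.sum_univ_two, Fintype.card_fin] at hCard
  omega
end

section
/- The 2-firm, 2-worker market with preferences f1: {w1,w2} ≻ ∅, f2: {w1} ≻ {w2} ≻ ∅, w1: f1 ≻ f2, w2: f1 ≻ f2 is π-concave under the scheme with π_Y = indicator of N(Y) for each acceptable assignment Y and capacities π_N(f1)=1, π_N(f2)=3, π_N(w1)=1, π_N(w2)=1; moreover, the matching assigning both workers to f1 is stable. -/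
open Finset
open scoped Classical

noncomputable section

variable {F W : Type} [Fintype F] [Fintype W] [DecidableEq F] [DecidableEq W]

/-- Capacities of the π scheme: π_N(f1) = 1, π_N(f2) = 3 (intensities are indicators). -/
def capF11 : Fin 2 → ℝ := fun f => if f = 0 then 1 else 3

lemma fin2cases (f : Fin 2) : f = 0 ∨ f = 1 := by omega

lemma ne01_0 : ({0,1} : Finset (Fin 2)) ≠ {0} := by decide
lemma ne01_1 : ({0,1} : Finset (Fin 2)) ≠ {1} := by decide
lemma ne01_e : ({0,1} : Finset (Fin 2)) ≠ ∅ := by decide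

lemma assigned0 : assigned (fun _ : Fin 2 => some (0:Fin 2)) 0 = {0,1} := by decide

lemma assigned1 : assigned (fun _ : Fin 2 => some (0:Fin 2)) 1 = ∅ := by decide

lemma uF10_001 : uF10 0 {0,1} = 1 := by simp [uF10]
lemma uF10_00 : uF10 0 ∅ = 0 := by simp [uF10, ne01_e.symm]
lemma uF10_10 : uF10 1 ∅ = 0 := by
  simp [uF10, (by decide : (∅ : Finset (Fin 2)) ≠ {0}), (by decide : (∅ : Finset (Fin 2)) ≠ {1})]
lemma uF10_101 : uF10 1 {0,1} = -1 := by
  simp [uF10, ne01_0, ne01_1, ne01_e]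

lemma uW10_0 (w : Fin 2) : uW10 w (some 0) = 2 := by simp [uW10]
lemma uW10_1 (w : Fin 2) : uW10 w (some 1) = 1 := by
  simp [uW10, (by decide : (some (1:Fin 2)) ≠ some 0)]
lemma uW10_n (w : Fin 2) : uW10 w none = 0 := by simp [uW10]

lemma uF0_le (S : Finset (Fin 2)) : uF10 0 S ≤ 1 := by
  unfold uF10; simp only [if_pos rfl]; split_ifs <;> norm_num

lemma uF0_pos {S : Finset (Fin 2)} (h : uF10 0 S > uF10 0 ∅) : S = {0,1} := by
  rw [uF10_00] at h
  unfold uF10 at h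
  simp only [if_pos rfl] at h
  by_contra hne
  split_ifs at h with h1 h2 <;> first | exact hne h1 | norm_num at h

lemma uF1_pos {S : Finset (Fin 2)} (h : uF10 1 S > uF10 1 ∅) : S = {0} ∨ S = {1} := by
  rw [uF10_10] at h
  unfold uF10 at h
  norm_num at h
  by_contra hne
  push_neg at hne
  split_ifs at h with h1 h2 h3 <;>
    first | exact hne.1 h1 | exact hne.2 h2 | norm_num at h

/-- The market f1: {w1,w2} ≻ ∅, f2: {w1} ≻ {w2} ≻ ∅, w1: f1 ≻ f2, w2: f1 ≻ f2 is
π-concave under the scheme with indicator intensities and capacities (1,3,1,1);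
moreover the matching assigning both workers to f1 is stable. -/
theorem stmt11 :
    (∀ t, IsSched uF10 capF11 (fun _ => 1) t →
      ∃ μ : Fin 2 → Option (Fin 2), Dominates uF10 uW10 capF11 (fun _ => 1) t μ) ∧
    StableM uF10 uW10 (fun _ => some 0) := by
  constructor
  · intro t ht
    obtain ⟨hnn, hacc, hcapF, hcapW⟩ := ht
    have hload : ∀ f : Fin 2, ∀ w : Fin 2, ∀ S : Finset (Fin 2), w ∈ S → t f S ≤ 1 := by
      intro f w S hwS
      have h1 : t f S ≤ ∑ S ∈ Finset.univ.filter (fun S => w ∈ S), t f S := by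
        apply Finset.single_le_sum (fun i _ => hnn f i)
        simp [hwS]
      have h2 : (∑ S ∈ Finset.univ.filter (fun S => w ∈ S), t f S) ≤ workerLoad t w := by
        unfold workerLoad
        exact Finset.single_le_sum (f := fun f => ∑ S ∈ Finset.univ.filter (fun S => w ∈ S), t f S)
          (fun i _ => Finset.sum_nonneg (fun j _ => hnn i j)) (Finset.mem_univ f)
      exact h1.trans (h2.trans (hcapW w))
    have hzero : ∀ f S, uF10 f S ≤ uF10 f ∅ → t f S = 0 := by
      intro f S h
      rcases lt_or_eq_of_le (hnn f S) with hpos | heq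
      · exact absurd (hacc f S hpos) (not_lt.2 h)
      · exact heq.symm
    have hsum1 : (∑ S, t 1 S) ≤ 2 := by
      have e0 : t 1 ∅ = 0 := hzero 1 ∅ le_rfl
      have e01 : t 1 {0,1} = 0 := by
        apply hzero; rw [uF10_101, uF10_10]; norm_num
      have huniv : (Finset.univ : Finset (Finset (Fin 2)))
          = insert ∅ (insert {0} (insert {1} {({0,1} : Finset (Fin 2))})) := by decide
      rw [huniv, Finset.sum_insert (by decide), Finset.sum_insert (by decide),
        Finset.sum_insert (by decide), Finset.sum_singleton, e0, e01]
      have a := hload 1 0 {0} (by decide)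
      have b := hload 1 1 {1} (by decide)
      linarith
    refine ⟨fun _ => some 0, ?_, ?_⟩
    · intro f S0 hW
      rcases fin2cases f with rfl | rfl
      · rw [assigned0, ge_iff_le, uF10_001]
        exact uF0_le S0
      · rcases hW with ⟨hsum, hpos, _⟩ | ⟨_, hS0⟩
        · exfalso
          have hc : capF11 1 = 3 := by norm_num [capF11]
          rw [hc] at hsum
          linarith
        · rw [hS0, assigned1]
    · intro w p hW
      have hsitu : situ (fun _ => some (0:Fin 2)) w = some (0, {0,1}) := by
        simp [situ, assigned0]
      rw [hsitu]
      rcases hW with ⟨_, f, S, hp, hpos, hwS, _⟩ | ⟨_, hp⟩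
      · subst hp
        rcases fin2cases f with rfl | rfl
        · have hS : S = {0,1} := uF0_pos (hacc 0 S hpos)
          exact Or.inr (by rw [hS])
        · left
          show uW10 w (some 0) > uW10 w (some 1) ∨ _
          left; rw [uW10_0, uW10_1]; norm_num
      · subst hp
        left
        show uW10 w (some 0) > uW10 w none
        rw [uW10_0, uW10_n]; norm_num
  · constructor
    · constructor
      · intro f
        rcases fin2cases f with rfl | rfl
        · rw [assigned0, ge_iff_le, uF10_00, uF10_001]; norm_num
        · rw [assigned1]
      · intro w
        show uW10 w (some 0) ≥ uW10 w none
        rw [uW10_0, uW10_n]; norm_num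
    · rintro ⟨f, S, hb1, hb2⟩
      rcases fin2cases f with rfl | rfl
      · rw [assigned0, uF10_001] at hb1
        have := uF0_le S
        linarith
      · rw [assigned1] at hb1
        rcases uF1_pos hb1 with hS | hS
        · have h := hb2 0 (by rw [hS]; exact Finset.mem_singleton_self 0)
          rw [uW10_1, uW10_0] at h
          norm_num at h
        · have h := hb2 1 (by rw [hS]; exact Finset.mem_singleton_self 1)
          rw [uW10_1, uW10_0] at h
          norm_num at h
end
end
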